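/- arXiv:2002.07125 — 2 statements merged into one kernel-verified Lean document; each statement's English description precedes it below -/
import Mathlib

section
/- Let C = ΦΦᵀ + αI where Φ ∈ R^{d×n}, α > 0, and let θ, x ∈ R^d with ‖θ‖₂ ≤ 1 and xᵀC⁻¹x ≤ 1. Then |xᵀ(C⁻¹ΦΦᵀ − I)θ| ≤ √α. -/
/-!
Since `ΦΦᵀ = C - αI`, the bias matrix is `C⁻¹ΦΦᵀ - I = -αC⁻¹`, so the quantity equals
`-α (yᵀθ)` with `yᵀ = xᵀC⁻¹`. As `C ≥ αI`, `α ‖y‖² ≤ yᵀCy = xᵀC⁻¹x ≤ 1`, and Cauchy–Schwarz gives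
`α² (yᵀθ)² ≤ α · α‖y‖² · ‖θ‖² ≤ α`.
-/

open Matrix

namespace Matrix

theorem posSemidef_self_mul_transpose {m n : Type*} [Fintype m] [Fintype n] (Φ : Matrix m n ℝ) :
    (Φ * Φᵀ).PosSemidef := by
  simpa [conjTranspose_eq_transpose_of_trivial] using posSemidef_self_mul_conjTranspose Φ

theorem PosSemidef.posDef_add_smul_one {ι : Type*} [DecidableEq ι] {M : Matrix ι ι ℝ}
    (hM : M.PosSemidef) {α : ℝ} (hα : 0 < α) : (M + α • 1).PosDef :=
  PosDef.posSemidef_add hM (PosDef.one.smul hα)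

variable {ι : Type*} [Fintype ι] [DecidableEq ι]

theorem PosSemidef.smul_dotProduct_self_le {M : Matrix ι ι ℝ} (hM : M.PosSemidef) (α : ℝ)
    (y : ι → ℝ) : α * (y ⬝ᵥ y) ≤ y ⬝ᵥ (M + α • 1) *ᵥ y := by
  rw [add_mulVec, smul_mulVec, one_mulVec, dotProduct_add, dotProduct_smul, smul_eq_mul]
  simpa using hM.dotProduct_mulVec_nonneg y

theorem inv_add_smul_one_mul_sub_one {K : Type*} [Field K] {M : Matrix ι ι K} {α : K}
    (h : IsUnit (M + α • 1 : Matrix ι ι K).det) :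
    (M + α • 1)⁻¹ * M - 1 = -α • (M + α • 1)⁻¹ := by
  set C := M + α • 1
  have hM : M = C - α • 1 := by simp [C]
  rw [hM, Matrix.mul_sub, nonsing_inv_mul _ h, Matrix.mul_smul, Matrix.mul_one]
  module

theorem vecMul_inv_dotProduct_mulVec_vecMul_inv {K : Type*} [Field K] {C : Matrix ι ι K}
    (hC : IsUnit C.det) (x : ι → K) : (x ᵥ* C⁻¹) ⬝ᵥ C *ᵥ (x ᵥ* C⁻¹) = x ⬝ᵥ C⁻¹ *ᵥ x := by
  rw [dotProduct_mulVec, vecMul_vecMul, nonsing_inv_mul _ hC, vecMul_one, dotProduct_mulVec,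
    dotProduct_comm]

end Matrix

theorem abs_mul_dotProduct_le_sqrt {ι : Type*} [Fintype ι] {α : ℝ} (hα : 0 ≤ α)
    {y θ : ι → ℝ} (hy : α * (y ⬝ᵥ y) ≤ 1) (hθ : ∑ i, θ i ^ 2 ≤ 1) :
    |α * (y ⬝ᵥ θ)| ≤ Real.sqrt α := by
  refine Real.abs_le_sqrt ?_
  have hyy : 0 ≤ y ⬝ᵥ y := by simpa using dotProduct_self_star_nonneg y
  have hcs : (y ⬝ᵥ θ) ^ 2 ≤ y ⬝ᵥ y := by
    refine le_trans ?_ (mul_le_of_le_one_right hyy hθ)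
    simpa only [dotProduct, sq] using Finset.sum_mul_sq_le_sq_mul_sq Finset.univ y θ
  calc (α * (y ⬝ᵥ θ)) ^ 2 = α * (α * (y ⬝ᵥ θ) ^ 2) := by ring
    _ ≤ α * (α * (y ⬝ᵥ y)) := by gcongr
    _ ≤ α * 1 := by gcongr
    _ = α := mul_one α

theorem stmt_6 {d n : ℕ} (Φ : Matrix (Fin d) (Fin n) ℝ)
    (α : ℝ) (hα : 0 < α)
    (C : Matrix (Fin d) (Fin d) ℝ)
    (hC : C = Φ * Φᵀ + α • (1 : Matrix (Fin d) (Fin d) ℝ))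
    (θ x : Fin d → ℝ) (hθ : ∑ i, (θ i) ^ 2 ≤ 1)
    (hx : x ⬝ᵥ C⁻¹.mulVec x ≤ 1) :
    |x ⬝ᵥ (C⁻¹ * (Φ * Φᵀ) - 1).mulVec θ| ≤ Real.sqrt α := by
  have hM := posSemidef_self_mul_transpose Φ
  have hdet : IsUnit C.det := by
    rw [← isUnit_iff_isUnit_det, hC]
    exact (hM.posDef_add_smul_one hα).isUnit
  have hy : α * ((x ᵥ* C⁻¹) ⬝ᵥ (x ᵥ* C⁻¹)) ≤ 1 := by
    refine (hM.smul_dotProduct_self_le α _).trans ?_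
    rwa [← hC, vecMul_inv_dotProduct_mulVec_vecMul_inv hdet]
  have hbias : x ⬝ᵥ (C⁻¹ * (Φ * Φᵀ) - 1) *ᵥ θ = -(α * ((x ᵥ* C⁻¹) ⬝ᵥ θ)) := by
    rw [hC] at hdet ⊢
    rw [inv_add_smul_one_mul_sub_one hdet, smul_mulVec, dotProduct_smul, dotProduct_mulVec,
      smul_eq_mul, neg_mul]
  rw [hbias, abs_neg]
  exact abs_mul_dotProduct_le_sqrt hα.le hy hθ
end

section
/- Let C = ΦΦᵀ + (ρ²/16)I where Φ ∈ R^{d×n}, ρ ∈ (0,1], θ ∈ R^d with ‖θ‖₂ ≤ 1. Suppose Q : indices → R and Y = Σᵢ φᵢ Qᵢ where |Qᵢ − θᵀφᵢ| ≤ δ for each column φᵢ of Φ. If n·δ² ≤ ρ²/16 (equivalently δ ≤ ρ/(4√n)), then for any (s,a)-feature x with xᵀC⁻¹x ≤ 1 and any target q with |q − θᵀx| ≤ δ, we have |xᵀC⁻¹Y − q| ≤ √n·δ + ρ/4 + δ ≤ ρ/2 whenever δ(√n + 1) ≤ ρ/4. -/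
/-!
Write `Q = Φᵀθ + ε` with `|εᵢ| ≤ δ` and `C = ΦΦᵀ + λ`, `λ = ρ²/16`. Since `ΦΦᵀθ = Cθ - λθ`,
`C⁻¹ΦQ = θ - C⁻¹(λθ) + C⁻¹Φε`. Pairing with `x` and using Cauchy–Schwarz in the `C⁻¹` inner product
(where `‖x‖ ≤ 1`), the bias term is at most `‖λθ‖_{C⁻¹} ≤ √λ ‖θ‖ ≤ ρ/4` because `C ⪰ λ`, and the noise
term at most `‖Φε‖_{C⁻¹} ≤ ‖ε‖ ≤ √n δ` because `C ⪰ ΦΦᵀ`; the remaining `|xᵀθ - q|` is at most `δ`.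
-/

open Matrix

namespace Matrix

variable {m k : Type*} [Fintype m] [Fintype k]

theorem IsSymm.dotProduct_mulVec_comm {R : Type*} [CommSemiring R] {M : Matrix m m R}
    (hM : M.IsSymm) (x y : m → R) :
    x ⬝ᵥ M *ᵥ y = y ⬝ᵥ M *ᵥ x := by
  rw [dotProduct_comm, dotProduct_mulVec, ← mulVec_transpose, hM.eq]

section Ordered

variable {R : Type*} [CommRing R] [LinearOrder R] [IsStrictOrderedRing R]

theorem PosSemidef.dotProduct_mulVec_sq_le [StarRing R] [TrivialStar R] [DecidableEq m]
    {M : Matrix m m R} (hM : M.PosSemidef) (x y : m → R) :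
    (x ⬝ᵥ M *ᵥ y) ^ 2 ≤ (x ⬝ᵥ M *ᵥ x) * (y ⬝ᵥ M *ᵥ y) := by
  have h := LinearMap.BilinForm.apply_mul_apply_le_of_forall_zero_le (toLinearMap₂' R M)
    (fun z ↦ by simpa [toLinearMap₂'_apply'] using hM.dotProduct_mulVec_nonneg z) x y
  simp only [toLinearMap₂'_apply'] at h
  rwa [(isHermitian_iff_isSymm.mp hM.isHermitian).dotProduct_mulVec_comm y x, ← sq] at h

theorem dotProduct_sq_le (x y : m → R) : (x ⬝ᵥ y) ^ 2 ≤ (x ⬝ᵥ x) * (y ⬝ᵥ y) := by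
  simpa [dotProduct, sq] using Finset.sum_mul_sq_le_sq_mul_sq Finset.univ x y

theorem dotProduct_self_le_of_abs_le {v : k → R} {δ : R} (hv : ∀ i, |v i| ≤ δ) :
    v ⬝ᵥ v ≤ Fintype.card k * δ ^ 2 := by
  calc v ⬝ᵥ v = ∑ i, |v i| ^ 2 := by simp [dotProduct, sq]
    _ ≤ ∑ _i : k, δ ^ 2 := Finset.sum_le_sum fun i _ ↦ pow_le_pow_left₀ (abs_nonneg _) (hv i) 2
    _ = Fintype.card k * δ ^ 2 := by simp

end Ordered

variable [DecidableEq m]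

theorem PosDef.abs_dotProduct_inv_mulVec_le_sqrt {C : Matrix m m ℝ} (hC : C.PosDef) {x u : m → ℝ}
    (hx : x ⬝ᵥ C⁻¹ *ᵥ x ≤ 1) : |x ⬝ᵥ C⁻¹ *ᵥ u| ≤ √(u ⬝ᵥ C⁻¹ *ᵥ u) := by
  refine Real.abs_le_sqrt ((hC.inv.posSemidef.dotProduct_mulVec_sq_le x u).trans ?_)
  exact mul_le_of_le_one_left (by simpa using hC.inv.posSemidef.dotProduct_mulVec_nonneg u) hx

/-- With `w = C⁻¹Be` and `s = ⟪Be, w⟫ = ⟪w, Cw⟫ = ⟪e, Bᵀw⟫`, Cauchy–Schwarz and `‖Bᵀw‖² ≤ ⟪w, Cw⟫`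
give `s² ≤ ‖e‖² s`. -/
theorem PosDef.dotProduct_inv_mulVec_le_of_posSemidef_sub {C : Matrix m m ℝ} (hC : C.PosDef) (B : Matrix m k ℝ)
    (hCB : (C - B * Bᵀ).PosSemidef) (e : k → ℝ) :
    B *ᵥ e ⬝ᵥ C⁻¹ *ᵥ (B *ᵥ e) ≤ e ⬝ᵥ e := by
  set w := C⁻¹ *ᵥ (B *ᵥ e)
  set s := B *ᵥ e ⬝ᵥ w
  have hCw : C *ᵥ w = B *ᵥ e := by
    rw [mulVec_mulVec, mul_nonsing_inv C hC.det_pos.ne'.isUnit, one_mulVec]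
  have hs_quad : s = w ⬝ᵥ C *ᵥ w := by rw [hCw, dotProduct_comm]
  have hs_nonneg : 0 ≤ s := by simpa [hs_quad] using hC.posSemidef.dotProduct_mulVec_nonneg w
  have hs_eq : s = e ⬝ᵥ Bᵀ *ᵥ w := by
    change B *ᵥ e ⬝ᵥ w = _
    rw [dotProduct_comm, dotProduct_mulVec, ← mulVec_transpose, dotProduct_comm]
  have hBw : Bᵀ *ᵥ w ⬝ᵥ Bᵀ *ᵥ w ≤ s := by
    have := (hCB.dotProduct_mulVec_nonneg w)
    rw [star_trivial, sub_mulVec, dotProduct_sub, ← mulVec_mulVec, dotProduct_mulVec w B,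
      ← mulVec_transpose] at this
    linarith
  have he : 0 ≤ e ⬝ᵥ e := by simpa using dotProduct_self_star_nonneg e
  have hsq : s ^ 2 ≤ (e ⬝ᵥ e) * s := by
    calc s ^ 2 ≤ (e ⬝ᵥ e) * (Bᵀ *ᵥ w ⬝ᵥ Bᵀ *ᵥ w) := hs_eq ▸ dotProduct_sq_le e _
      _ ≤ (e ⬝ᵥ e) * s := mul_le_mul_of_nonneg_left hBw he
  clear_value s
  nlinarith

section Ridge

variable (Φ : Matrix m k ℝ) {lam : ℝ}

theorem posDef_mul_transpose_add_smul_one (hlam : 0 < lam) : (Φ * Φᵀ + lam • (1 : Matrix m m ℝ)).PosDef := by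
  refine PosDef.posSemidef_add (by simpa using posSemidef_self_mul_conjTranspose Φ) ?_
  rw [smul_one_eq_diagonal]
  exact posDef_diagonal_iff.mpr fun _ ↦ hlam

theorem mulVec_dotProduct_inv_mulVec_mulVec_le (hlam : 0 < lam) (ε : k → ℝ) :
    Φ *ᵥ ε ⬝ᵥ (Φ * Φᵀ + lam • 1)⁻¹ *ᵥ (Φ *ᵥ ε) ≤ ε ⬝ᵥ ε :=
  (posDef_mul_transpose_add_smul_one Φ hlam).dotProduct_inv_mulVec_le_of_posSemidef_sub Φ
    (by simpa using PosDef.one.smul hlam |>.posSemidef) ε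

theorem smul_dotProduct_inv_mulVec_smul_le (hlam : 0 < lam) (θ : m → ℝ) :
    lam • θ ⬝ᵥ (Φ * Φᵀ + lam • 1)⁻¹ *ᵥ (lam • θ) ≤ lam * (θ ⬝ᵥ θ) := by
  have hsqrt : √lam * √lam = lam := Real.mul_self_sqrt hlam.le
  have hB : √lam • (1 : Matrix m m ℝ) * (√lam • (1 : Matrix m m ℝ))ᵀ = lam • 1 := by
    rw [transpose_smul, transpose_one, smul_mul_smul_comm, one_mul, hsqrt]
  have hBθ : (√lam • (1 : Matrix m m ℝ)) *ᵥ (√lam • θ) = lam • θ := by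
    rw [smul_mulVec, one_mulVec, smul_smul, hsqrt]
  have hθθ : √lam • θ ⬝ᵥ √lam • θ = lam * (θ ⬝ᵥ θ) := by
    rw [dotProduct_smul, smul_dotProduct, smul_eq_mul, smul_eq_mul, ← mul_assoc, hsqrt]
  have h := (posDef_mul_transpose_add_smul_one Φ hlam).dotProduct_inv_mulVec_le_of_posSemidef_sub
    (√lam • (1 : Matrix m m ℝ)) ?_ (√lam • θ)
  · rwa [hBθ, hθθ] at h
  · rw [hB, add_sub_cancel_right]
    simpa using posSemidef_self_mul_conjTranspose Φ

theorem inv_mulVec_mulVec_eq_sub_add (hlam : 0 < lam) (θ : m → ℝ) (Q : k → ℝ) :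
    (Φ * Φᵀ + lam • 1)⁻¹ *ᵥ (Φ *ᵥ Q) =
      θ - (Φ * Φᵀ + lam • 1)⁻¹ *ᵥ (lam • θ) + (Φ * Φᵀ + lam • 1)⁻¹ *ᵥ (Φ *ᵥ (Q - Φᵀ *ᵥ θ)) := by
  have hQ : Φ *ᵥ Q = (Φ * Φᵀ + lam • 1) *ᵥ θ - lam • θ + Φ *ᵥ (Q - Φᵀ *ᵥ θ) := by
    rw [add_mulVec, smul_mulVec, one_mulVec, mulVec_sub, ← mulVec_mulVec]
    abel
  rw [hQ, mulVec_add, mulVec_sub, mulVec_mulVec,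
    nonsing_inv_mul _ (posDef_mul_transpose_add_smul_one Φ hlam).det_pos.ne'.isUnit, one_mulVec]

theorem abs_dotProduct_inv_mulVec_mulVec_sub_le (hlam : 0 < lam) {x : m → ℝ}
    (hx : x ⬝ᵥ (Φ * Φᵀ + lam • 1)⁻¹ *ᵥ x ≤ 1) (θ : m → ℝ) (Q : k → ℝ) (q : ℝ) :
    |x ⬝ᵥ (Φ * Φᵀ + lam • 1)⁻¹ *ᵥ (Φ *ᵥ Q) - q| ≤
      √((Q - Φᵀ *ᵥ θ) ⬝ᵥ (Q - Φᵀ *ᵥ θ)) + √(lam * (θ ⬝ᵥ θ)) + |q - θ ⬝ᵥ x| := by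
  have hC := posDef_mul_transpose_add_smul_one Φ hlam
  have hnoise := (hC.abs_dotProduct_inv_mulVec_le_sqrt hx).trans
    (Real.sqrt_le_sqrt (mulVec_dotProduct_inv_mulVec_mulVec_le Φ hlam (Q - Φᵀ *ᵥ θ)))
  have hbias := (hC.abs_dotProduct_inv_mulVec_le_sqrt hx).trans
    (Real.sqrt_le_sqrt (smul_dotProduct_inv_mulVec_smul_le Φ hlam θ))
  rw [inv_mulVec_mulVec_eq_sub_add Φ hlam θ, dotProduct_add, dotProduct_sub, dotProduct_comm x θ, abs_le]
  constructor <;> linarith [abs_le.mp hnoise, abs_le.mp hbias, le_abs_self (q - θ ⬝ᵥ x),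
    neg_abs_le (q - θ ⬝ᵥ x)]

end Ridge

end Matrix

theorem stmt_8_general {d n : ℕ} (Φ : Matrix (Fin d) (Fin n) ℝ)
    (ρ δ : ℝ) (hρ0 : 0 < ρ) (hδ : 0 ≤ δ)
    (C : Matrix (Fin d) (Fin d) ℝ)
    (hC : C = Φ * Φᵀ + (ρ ^ 2 / 16) • (1 : Matrix (Fin d) (Fin d) ℝ))
    (θ : Fin d → ℝ) (hθ : ∑ i, (θ i) ^ 2 ≤ 1)
    (Q : Fin n → ℝ)
    (hQ : ∀ i, |Q i - θ ⬝ᵥ (fun j => Φ j i)| ≤ δ)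
    (Y : Fin d → ℝ) (hY : Y = Φ.mulVec Q)
    (hgap : δ * (Real.sqrt n + 1) ≤ ρ / 4)
    (x : Fin d → ℝ) (hx : x ⬝ᵥ C⁻¹.mulVec x ≤ 1)
    (q : ℝ) (hq : |q - θ ⬝ᵥ x| ≤ δ) :
    |x ⬝ᵥ C⁻¹.mulVec Y - q| ≤ Real.sqrt n * δ + ρ / 4 + δ ∧
      Real.sqrt n * δ + ρ / 4 + δ ≤ ρ / 2 := by
  refine ⟨?_, by linarith [show δ * (√n + 1) = √n * δ + δ by ring]⟩
  subst hC hY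
  have hnoise : (Q - Φᵀ *ᵥ θ) ⬝ᵥ (Q - Φᵀ *ᵥ θ) ≤ n * δ ^ 2 := by
    refine (dotProduct_self_le_of_abs_le fun i ↦ ?_).trans_eq (by rw [Fintype.card_fin])
    simpa [mulVec, dotProduct_comm] using hQ i
  have hbias : ρ ^ 2 / 16 * (θ ⬝ᵥ θ) ≤ (ρ / 4) ^ 2 := by
    have : θ ⬝ᵥ θ ≤ 1 := by simpa [dotProduct, sq] using hθ
    nlinarith
  calc _ ≤ √((Q - Φᵀ *ᵥ θ) ⬝ᵥ (Q - Φᵀ *ᵥ θ)) + √(ρ ^ 2 / 16 * (θ ⬝ᵥ θ)) + |q - θ ⬝ᵥ x| :=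
        abs_dotProduct_inv_mulVec_mulVec_sub_le Φ (by positivity) hx θ Q q
    _ ≤ √(n * δ ^ 2) + √((ρ / 4) ^ 2) + δ := by gcongr
    _ = √n * δ + ρ / 4 + δ := by
      rw [Real.sqrt_mul (Nat.cast_nonneg n), Real.sqrt_sq hδ, Real.sqrt_sq (by positivity)]

theorem stmt_8 {d n : ℕ} (Φ : Matrix (Fin d) (Fin n) ℝ)
    (ρ δ : ℝ) (hρ0 : 0 < ρ) (hρ1 : ρ ≤ 1) (hδ : 0 ≤ δ)
    (C : Matrix (Fin d) (Fin d) ℝ)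
    (hC : C = Φ * Φᵀ + (ρ ^ 2 / 16) • (1 : Matrix (Fin d) (Fin d) ℝ))
    (θ : Fin d → ℝ) (hθ : ∑ i, (θ i) ^ 2 ≤ 1)
    (Q : Fin n → ℝ)
    (hQ : ∀ i, |Q i - θ ⬝ᵥ (fun j => Φ j i)| ≤ δ)
    (Y : Fin d → ℝ) (hY : Y = Φ.mulVec Q)
    (hnδ : (n : ℝ) * δ ^ 2 ≤ ρ ^ 2 / 16)
    (hgap : δ * (Real.sqrt n + 1) ≤ ρ / 4)
    (x : Fin d → ℝ) (hx : x ⬝ᵥ C⁻¹.mulVec x ≤ 1)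
    (q : ℝ) (hq : |q - θ ⬝ᵥ x| ≤ δ) :
    |x ⬝ᵥ C⁻¹.mulVec Y - q| ≤ Real.sqrt n * δ + ρ / 4 + δ ∧
      Real.sqrt n * δ + ρ / 4 + δ ≤ ρ / 2 :=
  stmt_8_general Φ ρ δ hρ0 hδ C hC θ hθ Q hQ Y hY hgap x hx q hq
end
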